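/- arXiv:2604.25790 — 2 statements merged into one kernel-verified Lean document; each statement's English description precedes it below -/
import Mathlib

section
/- If an AME state exists in a mixed-dimensional system, then for any two nested dimension multisets w₁ ⊂ w₂ ⊆ N with dim w₁ > √(dim N), all proper sub-multisets of w₁ having dimension ≤ √(dim N), and all proper sub-multisets of w₂ other than w₁ having dimension ≤ √(dim N), the inequality (dim w₂)²/dim N − 1 ≥ (∏_{d∈𝔻} C(m_d(w₂), m_d(w₁))) · ((dim w₁)²/dim N − 1) holds (mixed-dimensional Scott bound). -/
/-!
Above the threshold `√(dim N)` the minimum in the MacWilliams relation is `dim N / dim w`, so the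
relation at `w` reads `∑_{v ⊆ w} C_{v,w} A_v = C(N, w) · (dim w)² / dim N`. The support conditions
leave only `A_∅ = 1` and `A_{w₁}` in the relation at `w₁`, and only `A_∅`, `A_{w₁}`, `A_{w₂}` in the
relation at `w₂`. Solving the first for `A_{w₁}` and the second for `A_{w₂}`, the identity
`C(N - w₁, w₂ - w₁) · C(N, w₁) = C(N, w₂) · C(w₂, w₁)` turns `A_{w₂} ≥ 0` into the bound after
dividing by `C(N, w₂) > 0`.
-/

/-- The dimension of a multiset with multiplicity function `u` over distinct
local dimensions `dims`. -/
def mdim {ι : Type*} [Fintype ι] (dims : ι → ℕ) (u : ι → ℕ) : ℚ :=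
  ∏ i : ι, (dims i : ℚ) ^ u i

section mdim

variable {ι : Type*} [Fintype ι] (dims : ι → ℕ)

@[simp]
lemma mdim_zero : mdim dims 0 = 1 := by
  simp [mdim]

lemma mdim_pos (hdims : ∀ i, 0 < dims i) (u : ι → ℕ) : 0 < mdim dims u :=
  Finset.prod_pos fun i _ => pow_pos (by exact_mod_cast hdims i) _

lemma mdim_mono (hdims : ∀ i, 1 ≤ dims i) {u v : ι → ℕ} (huv : u ≤ v) :
    mdim dims u ≤ mdim dims v :=
  Finset.prod_le_prod (fun i _ => by positivity)
    fun i _ => pow_le_pow_right₀ (by exact_mod_cast hdims i) (huv i)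

lemma one_le_mdim (hdims : ∀ i, 1 ≤ dims i) (u : ι → ℕ) : 1 ≤ mdim dims u :=
  mdim_zero dims ▸ mdim_mono dims hdims zero_le

lemma ne_zero_of_lt_mdim_sq (hdims : ∀ i, 1 ≤ dims i) {u w : ι → ℕ}
    (h : mdim dims u < mdim dims w ^ 2) : w ≠ 0 := by
  rintro rfl
  simp only [mdim_zero, one_pow] at h
  linarith [one_le_mdim dims hdims u]

end mdim

lemma prod_choose_sub_mul_prod_choose {ι : Type*} [Fintype ι] (N : ι → ℕ) {w₁ w₂ : ι → ℕ}
    (hw : w₁ ≤ w₂) :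
    (∏ i, ((N i - w₁ i).choose (w₂ i - w₁ i) : ℚ)) * ∏ i, ((N i).choose (w₁ i) : ℚ)
      = (∏ i, ((N i).choose (w₂ i) : ℚ)) * ∏ i, ((w₂ i).choose (w₁ i) : ℚ) := by
  rw [← Finset.prod_mul_distrib, ← Finset.prod_mul_distrib]
  refine Finset.prod_congr rfl fun i _ => ?_
  exact_mod_cast (Nat.mul_comm _ _).trans (Nat.choose_mul (n := N i) (hw i)).symm

lemma sum_Icc_mul_eq_of_support {ι : Type*} [Fintype ι] [DecidableEq ι]
    {f A : (ι → ℕ) → ℚ} {w : ι → ℕ} {s : Finset (ι → ℕ)} (hs : s ⊆ Finset.Icc 0 w)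
    (hA : ∀ v ≤ w, v ∉ s → A v = 0) :
    ∑ v ∈ Finset.Icc 0 w, f v * A v = ∑ v ∈ s, f v * A v :=
  (Finset.sum_subset hs fun v hv hvs => by
    rw [hA v (Finset.mem_Icc.1 hv).2 hvs, mul_zero]).symm

section coefficientSums

variable {ι : Type*} [Fintype ι] [DecidableEq ι] {N w : ι → ℕ} {A : (ι → ℕ) → ℚ}

lemma sum_Icc_choose_mul_eq_of_vanish_pair (hw : w ≠ 0) (hA0 : A 0 = 1)
    (hA : ∀ v ≤ w, v ≠ 0 → v ≠ w → A v = 0) :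
    ∑ v ∈ Finset.Icc 0 w, (∏ i, ((N i - v i).choose (w i - v i) : ℚ)) * A v
      = ∏ i, ((N i).choose (w i) : ℚ) + A w := by
  have hsupp : ∀ v ≤ w, v ∉ ({0, w} : Finset (ι → ℕ)) → A v = 0 := fun v hv hvs => by
    simp only [Finset.mem_insert, Finset.mem_singleton, not_or] at hvs
    exact hA v hv hvs.1 hvs.2
  rw [sum_Icc_mul_eq_of_support (by simp [Finset.insert_subset_iff]) hsupp,
    Finset.sum_pair (Ne.symm hw)]
  simp [hA0]

lemma sum_Icc_choose_mul_eq_of_vanish_triple {u : ι → ℕ} (hu : u ≠ 0) (huw : u ≤ w)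
    (hne : u ≠ w) (hA0 : A 0 = 1) (hA : ∀ v ≤ w, v ≠ 0 → v ≠ u → v ≠ w → A v = 0) :
    ∑ v ∈ Finset.Icc 0 w, (∏ i, ((N i - v i).choose (w i - v i) : ℚ)) * A v
      = ∏ i, ((N i).choose (w i) : ℚ)
        + (∏ i, ((N i - u i).choose (w i - u i) : ℚ)) * A u + A w := by
  have hw : w ≠ 0 := fun h => hu (le_antisymm (h ▸ huw) zero_le)
  have hsupp : ∀ v ≤ w, v ∉ ({0, u, w} : Finset (ι → ℕ)) → A v = 0 := fun v hv hvs => by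
    simp only [Finset.mem_insert, Finset.mem_singleton, not_or] at hvs
    exact hA v hv hvs.1 hvs.2.1 hvs.2.2
  rw [sum_Icc_mul_eq_of_support (by simp [Finset.insert_subset_iff, huw]) hsupp,
    Finset.sum_insert (by simp [Ne.symm hu, Ne.symm hw]), Finset.sum_pair hne]
  simp [hA0, add_assoc]

end coefficientSums

lemma eq_mul_sq_div_of_div_min_eq {B d D S : ℚ} (hd : 0 < d) (hD : 0 < D) (hdD : D < d ^ 2)
    (h : B / min d (D / d) = d⁻¹ * S) : S = B * (d ^ 2 / D) := by
  have hmin : min d (D / d) = D / d :=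
    min_eq_right ((div_le_iff₀ hd).2 (by nlinarith))
  rw [hmin] at h
  field_simp at h ⊢
  linear_combination -h

theorem scott_bound_general {ι : Type*} [Fintype ι] [DecidableEq ι]
    (dims : ι → ℕ) (hdims : ∀ i, 2 ≤ dims i)
    (N w₁ w₂ : ι → ℕ)
    (A : (ι → ℕ) → ℚ)
    (hA0 : A 0 = 1)
    (hApos : ∀ v, v ≤ N → 0 ≤ A v)
    (hAvanish : ∀ v, v ≤ N → v ≠ 0 →
      (mdim dims v) ^ 2 ≤ mdim dims N → A v = 0)
    (hMacW : ∀ w, w ≤ N →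
      (∏ i : ι, ((N i).choose (w i) : ℚ)) /
          min (mdim dims w) (mdim dims N / mdim dims w)
        = (mdim dims w)⁻¹ *
            ∑ v ∈ Finset.Icc 0 w,
              (∏ i : ι, ((N i - v i).choose (w i - v i) : ℚ)) * A v)
    (hw12 : w₁ ≤ w₂) (hw12ne : w₁ ≠ w₂) (hw2N : w₂ ≤ N)
    (h1 : mdim dims N < (mdim dims w₁) ^ 2)
    (h2 : ∀ v, v ≤ w₁ → v ≠ w₁ → (mdim dims v) ^ 2 ≤ mdim dims N)
    (h3 : ∀ u, u ≤ w₂ → u ≠ w₁ → u ≠ w₂ → (mdim dims u) ^ 2 ≤ mdim dims N) :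
    (mdim dims w₂) ^ 2 / mdim dims N - 1
      ≥ (∏ i : ι, ((w₂ i).choose (w₁ i) : ℚ)) *
          ((mdim dims w₁) ^ 2 / mdim dims N - 1) := by
  have hdims1 : ∀ i, 1 ≤ dims i := fun i => by linarith [hdims i]
  have hpos := mdim_pos dims fun i => hdims1 i
  have hw1N : w₁ ≤ N := hw12.trans hw2N
  have hw1 : w₁ ≠ 0 := ne_zero_of_lt_mdim_sq dims hdims1 h1
  have h1' : mdim dims N < mdim dims w₂ ^ 2 :=
    h1.trans_le (pow_le_pow_left₀ (hpos w₁).le (mdim_mono dims hdims1 hw12) 2)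
  have hS1 := eq_mul_sq_div_of_div_min_eq (hpos w₁) (hpos N) h1 (hMacW w₁ hw1N)
  have hS2 := eq_mul_sq_div_of_div_min_eq (hpos w₂) (hpos N) h1' (hMacW w₂ hw2N)
  rw [sum_Icc_choose_mul_eq_of_vanish_pair hw1 hA0
    fun v hv h0 hne => hAvanish v (hv.trans hw1N) h0 (h2 v hv hne)] at hS1
  rw [sum_Icc_choose_mul_eq_of_vanish_triple hw1 hw12 hw12ne hA0
    fun v hv h0 hne1 hne2 => hAvanish v (hv.trans hw2N) h0 (h3 v hv hne1 hne2)] at hS2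
  have hB2 : 0 < ∏ i, ((N i).choose (w₂ i) : ℚ) :=
    Finset.prod_pos fun i _ => by exact_mod_cast Nat.choose_pos (hw2N i)
  refine sub_nonneg.1 (nonneg_of_mul_nonneg_right ?_ hB2)
  refine (hApos w₂ hw2N).trans_eq ?_
  linear_combination hS2 - (∏ i, ((N i - w₁ i).choose (w₂ i - w₁ i) : ℚ)) * hS1
    - (mdim dims w₁ ^ 2 / mdim dims N - 1) * prod_choose_sub_mul_prod_choose N hw12

/-- Mixed-dimensional Scott bound: if an AME state exists (encoded here through
its Shor-Laflamme coefficients `A`: nonneg, `A_∅ = 1`, vanishing below the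
threshold `Δ = √(dim N)`, and satisfying the unitary/MacWilliams relation), then
for nested multisets `w₁ ⊂ w₂ ⊆ N` with `dim w₁ > Δ`, all proper sub-multisets
of `w₁` of dimension `≤ Δ`, and all proper sub-multisets of `w₂` other than `w₁`
of dimension `≤ Δ`, the Scott inequality holds. -/
theorem scott_bound {ι : Type*} [Fintype ι] [DecidableEq ι]
    (dims : ι → ℕ) (hdims : ∀ i, 2 ≤ dims i) (hinj : Function.Injective dims)
    (N w₁ w₂ : ι → ℕ)
    (A : (ι → ℕ) → ℚ)
    (hA0 : A 0 = 1)
    (hApos : ∀ v, v ≤ N → 0 ≤ A v)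
    (hAvanish : ∀ v, v ≤ N → v ≠ 0 →
      (mdim dims v) ^ 2 ≤ mdim dims N → A v = 0)
    (hMacW : ∀ w, w ≤ N →
      (∏ i : ι, ((N i).choose (w i) : ℚ)) /
          min (mdim dims w) (mdim dims N / mdim dims w)
        = (mdim dims w)⁻¹ *
            ∑ v ∈ Finset.Icc 0 w,
              (∏ i : ι, ((N i - v i).choose (w i - v i) : ℚ)) * A v)
    (hw12 : w₁ ≤ w₂) (hw12ne : w₁ ≠ w₂) (hw2N : w₂ ≤ N)
    (h1 : mdim dims N < (mdim dims w₁) ^ 2)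
    (h2 : ∀ v, v ≤ w₁ → v ≠ w₁ → (mdim dims v) ^ 2 ≤ mdim dims N)
    (h3 : ∀ u, u ≤ w₂ → u ≠ w₁ → u ≠ w₂ → (mdim dims u) ^ 2 ≤ mdim dims N) :
    (mdim dims w₂) ^ 2 / mdim dims N - 1
      ≥ (∏ i : ι, ((w₂ i).choose (w₁ i) : ℚ)) *
          ((mdim dims w₁) ^ 2 / mdim dims N - 1) :=
  scott_bound_general dims hdims N w₁ w₂ A hA0 hApos hAvanish hMacW hw12 hw12ne hw2N h1 h2 h3
end

section
/- The state |ψ⟩ = (1/2)|020⟩ + (1/2)|101⟩ + (1/(2√3))|002⟩ + (1/√6)|112⟩ + (1/√6)|013⟩ + (1/(2√3))|123⟩ in ℂ² ⊗ ℂ³ ⊗ ℂ⁴ is absolutely maximally entangled: it is a unit vector and each single-party reduced density matrix is maximally mixed (ρ₁ = 𝟙₂/2, ρ₂ = 𝟙₃/3, ρ₃ = 𝟙₄/4). -/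
open scoped ComplexConjugate

/-- The amplitudes of the state
`|ψ⟩ = (1/2)|020⟩ + (1/2)|101⟩ + (1/(2√3))|002⟩ + (1/√6)|112⟩ + (1/√6)|013⟩ + (1/(2√3))|123⟩`
in `ℂ² ⊗ ℂ³ ⊗ ℂ⁴`. -/
noncomputable def ameState234 : Fin 2 × Fin 3 × Fin 4 → ℂ := fun x =>
  if x = (0, 2, 0) then (1 / 2 : ℝ)
  else if x = (1, 0, 1) then (1 / 2 : ℝ)
  else if x = (0, 0, 2) then (1 / (2 * Real.sqrt 3) : ℝ)
  else if x = (1, 1, 2) then (1 / Real.sqrt 6 : ℝ)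
  else if x = (0, 1, 3) then (1 / Real.sqrt 6 : ℝ)
  else if x = (1, 2, 3) then (1 / (2 * Real.sqrt 3) : ℝ)
  else 0

lemma ame_i3 : (Real.sqrt 3)⁻¹ ^ 2 = 1 / 3 := by
  rw [inv_pow, Real.sq_sqrt (by norm_num : (3:ℝ) ≥ 0)]; norm_num

lemma ame_i6 : (Real.sqrt 6)⁻¹ ^ 2 = 1 / 6 := by
  rw [inv_pow, Real.sq_sqrt (by norm_num : (6:ℝ) ≥ 0)]; norm_num

lemma ame_rsq3 : (1 / (2 * Real.sqrt 3) : ℝ) * (1 / (2 * Real.sqrt 3)) = 1 / 12 := by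
  rw [div_mul_div_comm]
  rw [show (2 * Real.sqrt 3) * (2 * Real.sqrt 3) = 4 * (Real.sqrt 3 * Real.sqrt 3) by ring,
    Real.mul_self_sqrt (by norm_num)]
  norm_num

lemma ame_rsq6 : (1 / Real.sqrt 6 : ℝ) * (1 / Real.sqrt 6) = 1 / 6 := by
  rw [div_mul_div_comm, Real.mul_self_sqrt (by norm_num)]
  norm_num

/-- The state `ameState234` is absolutely maximally entangled in `ℂ² ⊗ ℂ³ ⊗ ℂ⁴`:
it is a unit vector and each single-party reduced density matrix is maximally
mixed (`ρ₁ = 𝟙₂/2`, `ρ₂ = 𝟙₃/3`, `ρ₃ = 𝟙₄/4`). -/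
theorem ameState234_is_AME :
    (∑ x : Fin 2 × Fin 3 × Fin 4, Complex.normSq (ameState234 x) = 1) ∧
    (∀ j j' : Fin 2, ∑ k : Fin 3, ∑ l : Fin 4,
        ameState234 (j, k, l) * conj (ameState234 (j', k, l))
      = if j = j' then (1 / 2 : ℂ) else 0) ∧
    (∀ k k' : Fin 3, ∑ j : Fin 2, ∑ l : Fin 4,
        ameState234 (j, k, l) * conj (ameState234 (j, k', l))
      = if k = k' then (1 / 3 : ℂ) else 0) ∧
    (∀ l l' : Fin 4, ∑ j : Fin 2, ∑ k : Fin 3,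
        ameState234 (j, k, l) * conj (ameState234 (j, k, l'))
      = if l = l' then (1 / 4 : ℂ) else 0) := by
  have h3 := Real.sq_sqrt (by norm_num : (3:ℝ) ≥ 0)
  have h6 := Real.sq_sqrt (by norm_num : (6:ℝ) ≥ 0)
  have p3 := Real.sqrt_pos.2 (by norm_num : (3:ℝ) > 0)
  have p6 := Real.sqrt_pos.2 (by norm_num : (6:ℝ) > 0)
  refine ⟨?_, ?_, ?_, ?_⟩
  · rw [Fintype.sum_prod_type]
    simp only [Fintype.sum_prod_type]
    simp (config := { decide := true }) only [ameState234, Fin.sum_univ_two,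
      Fin.sum_univ_three, Fin.sum_univ_four, Prod.mk.injEq, and_true, and_false,
      true_and, false_and, if_true, if_false, ite_true, ite_false, reduceIte,
      Complex.normSq_ofReal, Complex.normSq_zero]
    nlinarith [ame_rsq3, ame_rsq6]
  · intro j j'
    fin_cases j <;> fin_cases j' <;>
    · simp (config := { decide := true }) only [ameState234, Fin.sum_univ_three,
        Fin.sum_univ_four, Prod.mk.injEq, and_true, and_false, true_and, false_and,
        if_true, if_false, ite_true, ite_false, reduceIte, Complex.conj_ofReal,
        map_zero, mul_zero, zero_mul, add_zero, zero_add]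
      try norm_cast
      try rw [show (1/2 : ℂ) = ((1/2 : ℝ) : ℂ) by norm_num, Complex.ofReal_inj]
      try norm_num [ame_rsq3, ame_rsq6]
      try ring_nf
      try norm_num [ame_i3, ame_i6]
  · intro k k'
    fin_cases k <;> fin_cases k' <;>
    · simp (config := { decide := true }) only [ameState234, Fin.sum_univ_two,
        Fin.sum_univ_four, Prod.mk.injEq, and_true, and_false, true_and, false_and,
        if_true, if_false, ite_true, ite_false, reduceIte, Complex.conj_ofReal,
        map_zero, mul_zero, zero_mul, add_zero, zero_add]
      try norm_cast
      try rw [show (1/3 : ℂ) = ((1/3 : ℝ) : ℂ) by norm_num, Complex.ofReal_inj]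
      try norm_num [ame_rsq3, ame_rsq6]
      try ring_nf
      try norm_num [ame_i3, ame_i6]
  · intro l l'
    fin_cases l <;> fin_cases l' <;>
    · simp (config := { decide := true }) only [ameState234, Fin.sum_univ_two,
        Fin.sum_univ_three, Prod.mk.injEq, and_true, and_false, true_and, false_and,
        if_true, if_false, ite_true, ite_false, reduceIte, Complex.conj_ofReal,
        map_zero, mul_zero, zero_mul, add_zero, zero_add]
      try norm_cast
      try rw [show (1/4 : ℂ) = ((1/4 : ℝ) : ℂ) by norm_num, Complex.ofReal_inj]
      try norm_num [ame_rsq3, ame_rsq6]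
      try ring_nf
      try norm_num [ame_i3, ame_i6]
end
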